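/- arXiv:1804.00866 — 2 statements merged into one kernel-verified Lean document; each statement's English description precedes it below -/
import Mathlib

section
/- For p ∈ [0,1/2] and integers 1 ≤ j ≤ m, the odd-parity probability q̃_{2j} = ∑_{i=1}^{m-j+1} C(2m-2j+1, 2i-1) p^{2i-1} (1-p)^{2m-2j+2-2i} satisfies p ≤ q̃_{2j} ≤ 1/2. -/
lemma sum_odd_binom (n : ℕ) (p q : ℝ) :
    ∑ k ∈ (Finset.range (n+1)).filter (fun k => Odd k),
      (n.choose k : ℝ) * p^k * q^(n-k) = ((p+q)^n - (q-p)^n)/2 := by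
  have h1 := add_pow p q n
  have hq : q - p = -p + q := by ring
  have h2 : (q - p)^n = ∑ k ∈ Finset.range (n+1), (-p)^k * q^(n-k) * n.choose k := by
    rw [hq]; exact add_pow (-p) q n
  rw [eq_div_iff (two_ne_zero), h1, h2, ← Finset.sum_sub_distrib]
  rw [← Finset.sum_filter_add_sum_filter_not (Finset.range (n+1)) (fun k => Odd k)]
  have he : ∑ k ∈ (Finset.range (n+1)).filter (fun k => ¬ Odd k),
      (p ^ k * q ^ (n - k) * ↑(n.choose k) - (-p) ^ k * q ^ (n - k) * ↑(n.choose k)) = 0 := by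
    apply Finset.sum_eq_zero
    intro k hk
    simp only [Finset.mem_filter, Nat.not_odd_iff_even] at hk
    rw [hk.2.neg_pow]; ring
  rw [he, add_zero, Finset.sum_mul]
  apply Finset.sum_congr rfl
  intro k hk
  simp only [Finset.mem_filter] at hk
  rw [hk.2.neg_pow]; ring

lemma sum_odd_reindex (t : ℕ) (f : ℕ → ℝ) :
    ∑ i ∈ Finset.Icc 1 (t+1), f (2*i-1)
      = ∑ k ∈ (Finset.range (2*t+2)).filter (fun k => Odd k), f k := by
  refine Finset.sum_nbij' (fun i => 2*i-1) (fun k => (k+1)/2) ?_ ?_ ?_ ?_ ?_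
  · intro i hi
    simp only [Finset.mem_Icc] at hi
    simp only [Finset.mem_filter, Finset.mem_range]
    constructor
    · omega
    · exact ⟨i - 1, by omega⟩
  · intro k hk
    simp only [Finset.mem_filter, Finset.mem_range] at hk
    obtain ⟨a, ha⟩ := hk.2
    simp only [Finset.mem_Icc]
    omega
  · intro i hi
    simp only [Finset.mem_Icc] at hi
    omega
  · intro k hk
    simp only [Finset.mem_filter, Finset.mem_range] at hk
    obtain ⟨a, ha⟩ := hk.2
    omega
  · intro i hi; rfl

/-- For `p ∈ [0,1/2]` and `1 ≤ j ≤ m`, the odd-parity marginal probability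
`q̃_{2j} = ∑_{i=1}^{m-j+1} C(2m-2j+1, 2i-1) p^(2i-1) (1-p)^(2m-2j+2-2i)`
satisfies `p ≤ q̃_{2j} ≤ 1/2`. -/
theorem induced_Z_marginal_bounds (p : ℝ) (hp0 : 0 ≤ p) (hp1 : p ≤ 1 / 2)
    (m j : ℕ) (hj1 : 1 ≤ j) (hjm : j ≤ m) :
    p ≤ ∑ i ∈ Finset.Icc 1 (m - j + 1),
        ((2 * m - 2 * j + 1).choose (2 * i - 1) : ℝ) * p ^ (2 * i - 1)
          * (1 - p) ^ (2 * m - 2 * j + 2 - 2 * i) ∧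
    ∑ i ∈ Finset.Icc 1 (m - j + 1),
        ((2 * m - 2 * j + 1).choose (2 * i - 1) : ℝ) * p ^ (2 * i - 1)
          * (1 - p) ^ (2 * m - 2 * j + 2 - 2 * i) ≤ 1 / 2 := by
  have hS : ∑ i ∈ Finset.Icc 1 (m - j + 1),
        ((2 * m - 2 * j + 1).choose (2 * i - 1) : ℝ) * p ^ (2 * i - 1)
          * (1 - p) ^ (2 * m - 2 * j + 2 - 2 * i)
      = (1 - (1 - 2*p)^(2*(m-j)+1)) / 2 := by
    have h1 : ∑ i ∈ Finset.Icc 1 (m - j + 1),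
        ((2 * m - 2 * j + 1).choose (2 * i - 1) : ℝ) * p ^ (2 * i - 1)
          * (1 - p) ^ (2 * m - 2 * j + 2 - 2 * i)
        = ∑ i ∈ Finset.Icc 1 ((m-j)+1),
            ((2*(m-j)+1).choose (2*i-1) : ℝ) * p^(2*i-1) * (1-p)^((2*(m-j)+1) - (2*i-1)) := by
      apply Finset.sum_congr rfl
      intro i hi
      simp only [Finset.mem_Icc] at hi
      have e1 : 2 * m - 2 * j + 1 = 2*(m-j)+1 := by omega
      have e2 : 2 * m - 2 * j + 2 - 2 * i = (2*(m-j)+1) - (2*i-1) := by omega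
      rw [e1, e2]
    rw [h1, sum_odd_reindex (m-j) (fun k => (((2*(m-j)+1).choose k : ℝ)) * p^k * (1-p)^((2*(m-j)+1)-k))]
    have : 2*(m-j) + 2 = (2*(m-j)+1) + 1 := by omega
    rw [this, sum_odd_binom (2*(m-j)+1) p (1-p)]
    ring_nf
  rw [hS]
  have hx0 : 0 ≤ 1 - 2*p := by linarith
  have hx1 : 1 - 2*p ≤ 1 := by linarith
  constructor
  · have : (1 - 2*p)^(2*(m-j)+1) ≤ (1 - 2*p)^1 :=
      pow_le_pow_of_le_one hx0 hx1 (by omega)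
    simp at this
    linarith
  · have : 0 ≤ (1 - 2*p)^(2*(m-j)+1) := pow_nonneg hx0 _
    linarith
end

section
/- The circuit Ū = U_2 U_4 ⋯ U_{2m} satisfies, for 1 ≤ i ≤ m: Ū Z_{2i-1} Ū† = Z_{2i} ∏_{j=i}^{m} Z_{2j-1} and Ū Z_{2i} Ū† = Z_{2i} ∏_{j=i+1}^{m} Z_{2j-1}, while Ū Z_k Ū† = Z_k for k > 2m. -/
/-- A Pauli operator modulo phase, in symplectic representation: the pair of its
`X`-part and `Z`-part indicator vectors (qubits indexed by `ℕ`, qubit labels `≥ 1`). -/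
abbrev Pauli : Type := (ℕ → ZMod 2) × (ℕ → ZMod 2)

/-- The single-qubit Pauli `Z` on qubit `j`. -/
def Zp (j : ℕ) : Pauli := (0, Pi.single j 1)

/-- The single-qubit Pauli `X` on qubit `j`. -/
def Xp (j : ℕ) : Pauli := (Pi.single j 1, 0)

/-- Conjugation by the CNOT gate with control `c` and target `t`, acting on Pauli
operators in symplectic representation: `Z_t ↦ Z_c Z_t`, `Z_c ↦ Z_c`,
`X_c ↦ X_c X_t`, `X_t ↦ X_t`. -/
def cx (c t : ℕ) : Pauli → Pauli :=
  fun p => (p.1 + p.1 c • (Pi.single t 1 : ℕ → ZMod 2), p.2 + p.2 t • (Pi.single c 1 : ℕ → ZMod 2))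

/-- `U_{2i} = CX_1^{2i-1} CX_2^{2i-1} ⋯ CX_{2i-2}^{2i-1} CX_{2i-1}^{2i}` (where
`CX_t^c` has control `c` and target `t`), acting by conjugation: the rightmost gate
acts first. -/
def Ugate (i : ℕ) : Pauli → Pauli :=
  fun p => (List.range (2 * i - 2)).foldr (fun k q => cx (2 * i - 1) (k + 1) q)
    (cx (2 * i) (2 * i - 1) p)

/-- The circuit `Ū = U_2 U_4 ⋯ U_{2m}`, acting by conjugation: the rightmost gate
acts first. -/
def Ubar (m : ℕ) : Pauli → Pauli :=
  fun p => (List.range m).foldr (fun k q => Ugate (k + 1) q) p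

lemma cx_Z (c t : ℕ) (v : ℕ → ZMod 2) :
    cx c t ((0 : ℕ → ZMod 2), v) = (0, v + v t • (Pi.single c 1 : ℕ → ZMod 2)) := by
  simp [cx]

lemma foldr_cx (c : ℕ) : ∀ (n : ℕ), n < c → ∀ v : ℕ → ZMod 2,
    (List.range n).foldr (fun k q => cx c (k + 1) q) ((0 : ℕ → ZMod 2), v)
      = (0, v + (∑ k ∈ Finset.range n, v (k + 1)) • (Pi.single c 1 : ℕ → ZMod 2)) := by
  intro n
  induction n with
  | zero => intro _ v; simp
  | succ n ih =>
    intro hc v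
    rw [List.range_succ, List.foldr_append]
    simp only [List.foldr_cons, List.foldr_nil]
    rw [cx_Z, ih (by omega)]
    have hval : ∀ k ∈ Finset.range n,
        (v + v (n+1) • (Pi.single c 1 : ℕ → ZMod 2)) (k+1) = v (k+1) := by
      intro k hk
      rw [Finset.mem_range] at hk
      have h0 : (Pi.single c 1 : ℕ → ZMod 2) (k+1) = 0 := Pi.single_eq_of_ne (by omega) 1
      simp [h0]
    rw [Finset.sum_congr rfl hval, Finset.sum_range_succ]
    ext1
    · rfl
    · simp only
      rw [add_smul]
      abel

lemma Ugate_Z (i : ℕ) (hi : 1 ≤ i) (v : ℕ → ZMod 2) :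
    Ugate i (0, v) = (0, v + v (2*i-1) • (Pi.single (2*i) 1 : ℕ → ZMod 2)
      + (∑ k ∈ Finset.range (2*i-2), v (k+1)) • (Pi.single (2*i-1) 1 : ℕ → ZMod 2)) := by
  show (List.range (2 * i - 2)).foldr (fun k q => cx (2 * i - 1) (k + 1) q)
      (cx (2 * i) (2 * i - 1) (0, v)) = _
  rw [cx_Z, foldr_cx (2*i-1) (2*i-2) (by omega)]
  have hval : ∀ k ∈ Finset.range (2*i-2),
      (v + v (2*i-1) • (Pi.single (2*i) 1 : ℕ → ZMod 2)) (k+1) = v (k+1) := by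
    intro k hk
    rw [Finset.mem_range] at hk
    have h0 : (Pi.single (2*i) 1 : ℕ → ZMod 2) (k+1) = 0 := Pi.single_eq_of_ne (by omega) 1
    simp [h0]
  rw [Finset.sum_congr rfl hval]

lemma cx_add (c t : ℕ) (p q : Pauli) : cx c t (p + q) = cx c t p + cx c t q := by
  simp only [cx, Prod.mk_add_mk, Prod.mk.injEq, Prod.fst_add, Prod.snd_add, Pi.add_apply]
  constructor <;> (rw [add_smul]; abel)

lemma Ugate_add (i : ℕ) (p q : Pauli) : Ugate i (p + q) = Ugate i p + Ugate i q := by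
  unfold Ugate
  rw [cx_add]
  generalize cx (2*i) (2*i-1) p = p'
  generalize cx (2*i) (2*i-1) q = q'
  induction (List.range (2*i-2)) with
  | nil => rfl
  | cons a l ih => simp only [List.foldr_cons, ih, cx_add]

lemma Ubar_succ (m : ℕ) (p : Pauli) : Ubar (m+1) p = Ubar m (Ugate (m+1) p) := by
  simp [Ubar, List.range_succ, List.foldr_append]

lemma Ubar_add (m : ℕ) (p q : Pauli) : Ubar m (p + q) = Ubar m p + Ubar m q := by
  induction m generalizing p q with
  | zero => rfl
  | succ n ih =>
    rw [Ubar_succ, Ubar_succ, Ubar_succ, Ugate_add]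
    exact ih _ _

lemma Ubar_high : ∀ m k : ℕ, 2 * m < k → Ubar m (Zp k) = Zp k := by
  intro m
  induction m with
  | zero => intro k _; rfl
  | succ n ih =>
    intro k hk
    rw [Ubar_succ]
    have h1 : Ugate (n+1) (Zp k) = Zp k := by
      rw [Zp, Ugate_Z _ (by omega)]
      have e1 : (Pi.single k 1 : ℕ → ZMod 2) (2*(n+1)-1) = 0 :=
        Pi.single_eq_of_ne (by omega) 1
      have e2 : ∑ j ∈ Finset.range (2*(n+1)-2), (Pi.single k 1 : ℕ → ZMod 2) (j+1) = 0 := by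
        apply Finset.sum_eq_zero
        intro j hj
        rw [Finset.mem_range] at hj
        exact Pi.single_eq_of_ne (by omega) 1
      rw [e1, e2]
      simp [Zp]
    rw [h1]
    exact ih k (by omega)

lemma Ugate_Zlow (m p : ℕ) (hp1 : 1 ≤ p) (hp : p ≤ 2*m) :
    Ugate (m+1) (Zp p) = Zp p + Zp (2*m+1) := by
  rw [Zp, Ugate_Z _ (by omega)]
  have e1 : (Pi.single p 1 : ℕ → ZMod 2) (2*(m+1)-1) = 0 :=
    Pi.single_eq_of_ne (by omega) 1
  have e2 : ∑ j ∈ Finset.range (2*(m+1)-2), (Pi.single p 1 : ℕ → ZMod 2) (j+1) = 1 := by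
    rw [Finset.sum_eq_single (p-1)]
    · rw [(by omega : p - 1 + 1 = p)]
      exact Pi.single_eq_same p 1
    · intro j hj hne
      exact Pi.single_eq_of_ne (by omega) 1
    · intro h
      exact absurd (Finset.mem_range.mpr (by omega)) h
  rw [e1, e2, (by omega : 2*(m+1)-1 = 2*m+1)]
  simp [Zp, Prod.ext_iff]

lemma Ugate_Zodd (i : ℕ) (hi : 1 ≤ i) : Ugate i (Zp (2*i-1)) = Zp (2*i-1) + Zp (2*i) := by
  rw [Zp, Ugate_Z i hi]
  have e1 : (Pi.single (2*i-1) 1 : ℕ → ZMod 2) (2*i-1) = 1 := Pi.single_eq_same _ 1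
  have e2 : ∑ j ∈ Finset.range (2*i-2), (Pi.single (2*i-1) 1 : ℕ → ZMod 2) (j+1) = 0 := by
    apply Finset.sum_eq_zero
    intro j hj
    rw [Finset.mem_range] at hj
    exact Pi.single_eq_of_ne (by omega) 1
  rw [e1, e2]
  simp [Zp, Prod.ext_iff]

lemma Ugate_Zeven (i : ℕ) (hi : 1 ≤ i) : Ugate i (Zp (2*i)) = Zp (2*i) := by
  rw [Zp, Ugate_Z i hi]
  have e1 : (Pi.single (2*i) 1 : ℕ → ZMod 2) (2*i-1) = 0 := Pi.single_eq_of_ne (by omega) 1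
  have e2 : ∑ j ∈ Finset.range (2*i-2), (Pi.single (2*i) 1 : ℕ → ZMod 2) (j+1) = 0 := by
    apply Finset.sum_eq_zero
    intro j hj
    rw [Finset.mem_range] at hj
    exact Pi.single_eq_of_ne (by omega) 1
  rw [e1, e2]
  simp [Zp]

lemma Ubar_odd (i : ℕ) (hi : 1 ≤ i) : ∀ m, i ≤ m →
    Ubar m (Zp (2*i-1)) = Zp (2*i) + ∑ j ∈ Finset.Icc i m, Zp (2*j-1) := by
  intro m him
  induction m, him using Nat.le_induction with
  | base =>
    obtain ⟨i', rfl⟩ : ∃ i', i = i'+1 := ⟨i-1, by omega⟩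
    rw [Ubar_succ, Ugate_Zodd _ hi, Ubar_add, Ubar_high _ _ (by omega),
      Ubar_high _ _ (by omega), Finset.Icc_self, Finset.sum_singleton]
    abel
  | succ m hm ih =>
    rw [Ubar_succ, Ugate_Zlow m (2*i-1) (by omega) (by omega), Ubar_add, ih,
      Ubar_high _ _ (by omega), Finset.sum_Icc_succ_top (by omega : i ≤ m+1),
      (by omega : 2*(m+1)-1 = 2*m+1)]
    abel

lemma Ubar_even (i : ℕ) (hi : 1 ≤ i) : ∀ m, i ≤ m →
    Ubar m (Zp (2*i)) = Zp (2*i) + ∑ j ∈ Finset.Icc (i+1) m, Zp (2*j-1) := by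
  intro m him
  induction m, him using Nat.le_induction with
  | base =>
    obtain ⟨i', rfl⟩ : ∃ i', i = i'+1 := ⟨i-1, by omega⟩
    rw [Ubar_succ, Ugate_Zeven _ hi, Ubar_high _ _ (by omega),
      Finset.Icc_eq_empty (by omega), Finset.sum_empty, add_zero]
  | succ m hm ih =>
    rw [Ubar_succ, Ugate_Zlow m (2*i) (by omega) (by omega), Ubar_add, ih,
      Ubar_high _ _ (by omega), Finset.sum_Icc_succ_top (by omega : i+1 ≤ m+1),
      (by omega : 2*(m+1)-1 = 2*m+1)]
    abel

/-- For `1 ≤ i ≤ m`: `Ū Z_{2i-1} Ū† = Z_{2i} ∏_{j=i}^{m} Z_{2j-1}` and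
`Ū Z_{2i} Ū† = Z_{2i} ∏_{j=i+1}^{m} Z_{2j-1}`, while `Ū Z_k Ū† = Z_k` for `k > 2m`. -/
theorem Ubar_action (m i : ℕ) (hi1 : 1 ≤ i) (him : i ≤ m) :
    Ubar m (Zp (2 * i - 1)) = Zp (2 * i) + ∑ j ∈ Finset.Icc i m, Zp (2 * j - 1) ∧
    Ubar m (Zp (2 * i)) = Zp (2 * i) + ∑ j ∈ Finset.Icc (i + 1) m, Zp (2 * j - 1) ∧
    (∀ k : ℕ, 2 * m < k → Ubar m (Zp k) = Zp k) := by
  exact ⟨Ubar_odd i hi1 m him, Ubar_even i hi1 m him, Ubar_high m⟩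
end
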